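/- Let F be a probability measure on [0,∞) admitting a bounded density f on (0,∞) with support in [a,b], 0 < a ≤ b, plus a possible point mass at 0, with Stieltjes transform m, and let y, σ > 0. If t = t(z) solves t = y - 1 + y(z - tσ²)m(z - tσ²) for z = u + iv, then as v → ∞, uniformly in u, we have Im(t) → 0 and Re(t) → -1. -/

import Mathlib

/-!
With `w = z - tσ²`, the equation reads `t + 1 = y (1 + w m(w)) = y ∫ x (x - w)⁻¹ dF(x)`, and the
integrand vanishes at the atom `0`. Its imaginary part is `x Im (x - w)⁻¹`, a Poisson kernel times
`x ≤ b`, so against the bounded density it integrates to at most `Cf b π`: `Im t` stays bounded,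
hence `Im w ≥ Im z - O(1) → ∞`. Since `|x (x - w)⁻¹| ≤ b / Im w` on the support of `F`,
`|t + 1| ≤ y b / Im w → 0`.
-/

open MeasureTheory Complex Real Set

/-- `Im (x - w)⁻¹`, i.e. `π` times the Poisson kernel of the upper half-plane. -/
noncomputable def halfPlanePoissonKernel (w : ℂ) (x : ℝ) : ℝ :=
  w.im / ((x - w.re) ^ 2 + w.im ^ 2)

noncomputable def diracAddWithDensity (c : ℝ) (f : ℝ → ℝ) : Measure ℝ :=
  ENNReal.ofReal c • Measure.dirac 0 +
    ENNReal.ofReal (1 - c) • volume.withDensity fun x => ENNReal.ofReal (f x)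

section Kernels

variable {w : ℂ}

lemma halfPlanePoissonKernel_nonneg (hw : 0 < w.im) (x : ℝ) : 0 ≤ halfPlanePoissonKernel w x := by
  unfold halfPlanePoissonKernel
  positivity

lemma halfPlanePoissonKernel_eq (hw : 0 < w.im) (x : ℝ) :
    halfPlanePoissonKernel w x = w.im⁻¹ * (1 + ((x - w.re) / w.im) ^ 2)⁻¹ := by
  unfold halfPlanePoissonKernel
  field_simp
  ring

lemma integrable_halfPlanePoissonKernel (hw : 0 < w.im) :
    Integrable (halfPlanePoissonKernel w) := by
  simp_rw [funext (halfPlanePoissonKernel_eq hw)]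
  exact ((integrable_inv_one_add_sq.comp_div hw.ne').comp_sub_right w.re).const_mul _

lemma integral_halfPlanePoissonKernel (hw : 0 < w.im) :
    ∫ x, halfPlanePoissonKernel w x = π := by
  simp_rw [halfPlanePoissonKernel_eq hw, integral_const_mul,
    integral_sub_right_eq_self (fun x => (1 + (x / w.im) ^ 2)⁻¹) w.re,
    Measure.integral_comp_div (fun x => (1 + x ^ 2)⁻¹), integral_univ_inv_one_add_sq,
    abs_of_pos hw, smul_eq_mul]
  field_simp

lemma im_le_norm_ofReal_sub (x : ℝ) (w : ℂ) : w.im ≤ ‖(x : ℂ) - w‖ := by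
  have h := abs_im_le_norm ((x : ℂ) - w)
  rw [sub_im, ofReal_im, zero_sub, abs_neg] at h
  exact (le_abs_self _).trans h

lemma ofReal_sub_ne_zero (x : ℝ) (hw : 0 < w.im) : (x : ℂ) - w ≠ 0 :=
  norm_pos_iff.1 (hw.trans_le (im_le_norm_ofReal_sub x w))

lemma norm_inv_ofReal_sub_le (x : ℝ) (hw : 0 < w.im) : ‖((x : ℂ) - w)⁻¹‖ ≤ w.im⁻¹ := by
  rw [norm_inv]
  exact inv_anti₀ hw (im_le_norm_ofReal_sub x w)

lemma ofReal_mul_inv_ofReal_sub (x : ℝ) (hw : 0 < w.im) :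
    (x : ℂ) * ((x : ℂ) - w)⁻¹ = 1 + w * ((x : ℂ) - w)⁻¹ := by
  field_simp [ofReal_sub_ne_zero x hw]
  ring

lemma norm_ofReal_mul_inv_ofReal_sub_le {x b : ℝ} (hx : |x| ≤ b) (hw : 0 < w.im) :
    ‖(x : ℂ) * ((x : ℂ) - w)⁻¹‖ ≤ b / w.im := by
  rw [norm_mul, norm_real, Real.norm_eq_abs, div_eq_mul_inv]
  exact mul_le_mul hx (norm_inv_ofReal_sub_le x hw) (norm_nonneg _) ((abs_nonneg x).trans hx)

lemma im_ofReal_mul_inv_ofReal_sub (x : ℝ) (w : ℂ) :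
    ((x : ℂ) * ((x : ℂ) - w)⁻¹).im = x * halfPlanePoissonKernel w x := by
  simp only [mul_im, inv_re, inv_im, normSq_apply, sub_re, sub_im, ofReal_re, ofReal_im,
    halfPlanePoissonKernel]
  ring

end Kernels

section Integrals

variable {μ : Measure ℝ} {w : ℂ}

lemma integrable_inv_ofReal_sub [IsFiniteMeasure μ] (hw : 0 < w.im) :
    Integrable (fun x : ℝ => ((x : ℂ) - w)⁻¹) μ :=
  .of_bound (by fun_prop) _ (.of_forall fun x => norm_inv_ofReal_sub_le x hw)

lemma integrable_ofReal_mul_inv_ofReal_sub [IsFiniteMeasure μ] (hw : 0 < w.im) :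
    Integrable (fun x : ℝ => (x : ℂ) * ((x : ℂ) - w)⁻¹) μ := by
  simp_rw [ofReal_mul_inv_ofReal_sub _ hw]
  exact (integrable_const 1).add ((integrable_inv_ofReal_sub hw).const_mul w)

lemma one_add_mul_integral_inv_ofReal_sub [IsProbabilityMeasure μ] (hw : 0 < w.im) :
    1 + w * ∫ x, ((x : ℂ) - w)⁻¹ ∂μ = ∫ x, (x : ℂ) * ((x : ℂ) - w)⁻¹ ∂μ := by
  simp_rw [ofReal_mul_inv_ofReal_sub _ hw]
  rw [integral_add (integrable_const 1) ((integrable_inv_ofReal_sub hw).const_mul w),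
    integral_const_mul, integral_const, probReal_univ, one_smul]

lemma norm_integral_ofReal_mul_inv_ofReal_sub_le [IsProbabilityMeasure μ] {b : ℝ}
    (hμ : ∀ᵐ x ∂μ, |x| ≤ b) (hw : 0 < w.im) :
    ‖∫ x, (x : ℂ) * ((x : ℂ) - w)⁻¹ ∂μ‖ ≤ b / w.im := by
  simpa using norm_integral_le_of_norm_le_const
    (hμ.mono fun x hx => norm_ofReal_mul_inv_ofReal_sub_le hx hw)

end Integrals

section DiracAddWithDensity

variable {c : ℝ} {f : ℝ → ℝ}

lemma ae_mem_of_eq_zero_off {s : Set ℝ} (hf : Measurable f) (hs : MeasurableSet s) (h0 : 0 ∈ s)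
    (hfs : ∀ x ∉ s, f x = 0) : ∀ᵐ x ∂diracAddWithDensity c f, x ∈ s := by
  rw [diracAddWithDensity, ae_add_measure_iff]
  refine ⟨Measure.ae_smul_measure ((ae_dirac_iff hs).2 h0) _, Measure.ae_smul_measure ?_ _⟩
  rw [ae_withDensity_iff hf.ennreal_ofReal]
  exact .of_forall fun x hx => by_contra fun hxs => hx (by rw [hfs x hxs, ENNReal.ofReal_zero])

lemma integral_diracAddWithDensity {E : Type*} [NormedAddCommGroup E] [NormedSpace ℝ E]
    [CompleteSpace E] (hc0 : 0 ≤ c) (hc1 : c ≤ 1) (hf : Measurable f) (hf_nonneg : ∀ x, 0 ≤ f x)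
    {g : ℝ → E} (hfg : Integrable fun x => f x • g x) :
    ∫ x, g x ∂diracAddWithDensity c f = c • g 0 + (1 - c) • ∫ x, f x • g x := by
  have hf' : Measurable fun x => (f x).toNNReal := hf.real_toNNReal
  have hsmul : (fun x => (f x).toNNReal • g x) = fun x => f x • g x := by
    funext x
    rw [NNReal.smul_def, Real.coe_toNNReal _ (hf_nonneg x)]
  have hden : (fun x => ENNReal.ofReal (f x)) = fun x => ((f x).toNNReal : ENNReal) := rfl
  have hg : Integrable g (volume.withDensity fun x => ENNReal.ofReal (f x)) := by
    rwa [hden, integrable_withDensity_iff_integrable_smul hf', hsmul]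
  rw [diracAddWithDensity,
    integral_add_measure ((integrable_dirac enorm_lt_top).smul_measure ENNReal.ofReal_ne_top)
      (hg.smul_measure ENNReal.ofReal_ne_top),
    integral_smul_measure, integral_smul_measure, integral_dirac, ENNReal.toReal_ofReal hc0,
    ENNReal.toReal_ofReal (sub_nonneg.2 hc1), hden,
    integral_withDensity_eq_integral_smul hf', hsmul]

lemma im_integral_ofReal_mul_inv_ofReal_sub_le [IsFiniteMeasure (diracAddWithDensity c f)]
    (hc0 : 0 ≤ c) (hc1 : c ≤ 1) (hf : Measurable f) (hf_nonneg : ∀ x, 0 ≤ f x) {Cf b : ℝ}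
    (hb : 0 ≤ b) (hf_bdd : ∀ x, f x ≤ Cf) (hf_supp : ∀ x ∉ Icc 0 b, f x = 0) {w : ℂ}
    (hw : 0 < w.im) :
    (∫ x, (x : ℂ) * ((x : ℂ) - w)⁻¹ ∂diracAddWithDensity c f).im ≤ (1 - c) * (Cf * b * π) := by
  have hP := halfPlanePoissonKernel_nonneg hw
  have hCf : 0 ≤ Cf := (hf_nonneg 0).trans (hf_bdd 0)
  have hbound : ∀ x, 0 ≤ f x * (x * halfPlanePoissonKernel w x) ∧
      f x * (x * halfPlanePoissonKernel w x) ≤ Cf * b * halfPlanePoissonKernel w x := by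
    intro x
    by_cases hx : x ∈ Icc 0 b
    · have hxP := mul_nonneg hx.1 (hP x)
      refine ⟨mul_nonneg (hf_nonneg x) hxP, ?_⟩
      rw [mul_assoc]
      exact mul_le_mul (hf_bdd x) (mul_le_mul_of_nonneg_right hx.2 (hP x)) hxP hCf
    · rw [hf_supp x hx, zero_mul]
      exact ⟨le_rfl, mul_nonneg (mul_nonneg hCf hb) (hP x)⟩
  have hdom : Integrable fun x => Cf * b * halfPlanePoissonKernel w x :=
    (integrable_halfPlanePoissonKernel hw).const_mul _
  have hint : Integrable fun x => f x * (x * halfPlanePoissonKernel w x) := by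
    refine hdom.mono' (by unfold halfPlanePoissonKernel; fun_prop) (.of_forall fun x => ?_)
    rw [Real.norm_eq_abs, abs_of_nonneg (hbound x).1]
    exact (hbound x).2
  calc (∫ x, (x : ℂ) * ((x : ℂ) - w)⁻¹ ∂diracAddWithDensity c f).im
      = ∫ x, x * halfPlanePoissonKernel w x ∂diracAddWithDensity c f := by
        simpa only [RCLike.im_to_complex, im_ofReal_mul_inv_ofReal_sub] using
          (integral_im (integrable_ofReal_mul_inv_ofReal_sub (μ := diracAddWithDensity c f) hw)).symm
    _ = (1 - c) * ∫ x, f x * (x * halfPlanePoissonKernel w x) := by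
        rw [integral_diracAddWithDensity hc0 hc1 hf hf_nonneg hint]
        simp
    _ ≤ (1 - c) * ∫ x, Cf * b * halfPlanePoissonKernel w x :=
        mul_le_mul_of_nonneg_left (integral_mono hint hdom fun x => (hbound x).2)
          (sub_nonneg.2 hc1)
    _ = (1 - c) * (Cf * b * π) := by
        rw [integral_const_mul, integral_halfPlanePoissonKernel hw]

end DiracAddWithDensity

lemma abs_im_lt_and_abs_re_add_one_lt {t : ℂ} {ε : ℝ} (h : ‖t + 1‖ < ε) :
    |t.im| < ε ∧ |t.re + 1| < ε :=
  ⟨by simpa using (abs_im_le_norm (t + 1)).trans_lt h,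
    by simpa using (abs_re_le_norm (t + 1)).trans_lt h⟩

theorem t_limit_as_v_to_infty_general
    (a b c Cf : ℝ) (ha : 0 < a) (hab : a ≤ b) (hc0 : 0 ≤ c) (hc1 : c < 1)
    (f : ℝ → ℝ) (hf_meas : Measurable f) (hf_nonneg : ∀ x, 0 ≤ f x)
    (hf_bdd : ∀ x, f x ≤ Cf) (hf_supp : ∀ x, x ∉ Set.Icc a b → f x = 0)
    (F : Measure ℝ)
    (hF : F = (ENNReal.ofReal c) • Measure.dirac (0 : ℝ) +
        (ENNReal.ofReal (1 - c)) • (volume.withDensity fun x => ENNReal.ofReal (f x)))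
    (hprob : IsProbabilityMeasure F)
    (y σ : ℝ) (hy : 0 < y)
    (m : ℂ → ℂ) (hm : ∀ w : ℂ, m w = ∫ x, ((x : ℂ) - w)⁻¹ ∂F) :
    ∀ ε > (0 : ℝ), ∃ V : ℝ, ∀ z t : ℂ, V ≤ z.im →
      0 < t.im → 0 < (z - t * (σ : ℂ) ^ 2).im →
      t = (y : ℂ) - 1 + (y : ℂ) * (z - t * (σ : ℂ) ^ 2) * m (z - t * (σ : ℂ) ^ 2) →
      |t.im| < ε ∧ |t.re + 1| < ε := by
  intro ε hε
  obtain rfl : F = diracAddWithDensity c f := hF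
  have hb : 0 ≤ b := ha.le.trans hab
  have hsupp : ∀ x ∉ Icc 0 b, f x = 0 := fun x hx => hf_supp x fun h => hx ⟨ha.le.trans h.1, h.2⟩
  have hF_abs : ∀ᵐ x ∂diracAddWithDensity c f, |x| ≤ b :=
    (ae_mem_of_eq_zero_off hf_meas measurableSet_Icc ⟨le_rfl, hb⟩ hsupp).mono
      fun x hx => abs_le.2 ⟨by linarith [hx.1], hx.2⟩
  set B := y * ((1 - c) * (Cf * b * π))
  refine ⟨σ ^ 2 * B + y * b / ε + 1, fun z t hv _ hw heq => ?_⟩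
  set w := z - t * (σ : ℂ) ^ 2
  set K := ∫ x, (x : ℂ) * ((x : ℂ) - w)⁻¹ ∂diracAddWithDensity c f
  have hK : 1 + w * m w = K := by
    rw [hm]
    exact one_add_mul_integral_inv_ofReal_sub hw
  have ht : t + 1 = y * K := by
    rw [← hK]
    linear_combination heq
  have ht_im : t.im ≤ B :=
    calc t.im = y * K.im := by simpa using congrArg im ht
      _ ≤ B := mul_le_mul_of_nonneg_left
          (im_integral_ofReal_mul_inv_ofReal_sub_le hc0 hc1.le hf_meas hf_nonneg hb hf_bdd hsupp hw)
          hy.le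
  have hw_im : y * b / ε < w.im := by
    have : w.im = z.im - σ ^ 2 * t.im := by simp [w, ← ofReal_pow]; ring
    nlinarith [sq_nonneg σ]
  have ht_norm : ‖t + 1‖ < ε :=
    calc ‖t + 1‖ ≤ y * (b / w.im) := by
          rw [ht, norm_mul, norm_real, Real.norm_eq_abs, abs_of_pos hy]
          exact mul_le_mul_of_nonneg_left (norm_integral_ofReal_mul_inv_ofReal_sub_le hF_abs hw) hy.le
      _ < ε := by
          rw [← mul_div_assoc, div_lt_iff₀ hw, mul_comm ε]
          exact (div_lt_iff₀ hε).1 hw_im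
  exact abs_im_lt_and_abs_re_add_one_lt ht_norm

/-- Let `F = c δ₀ + (1-c)·(f dx)` with `f` a bounded density supported in
`[a,b]`, `0 < a ≤ b`, `0 ≤ c < 1`, and `m` its Stieltjes transform; `y, σ > 0`. If for
each `z = u + iv`, `t(z)` solves `t = y - 1 + y(z - tσ²)m(z - tσ²)` (with `Im t > 0`,
`Im(z - tσ²) > 0`), then as `v → ∞`, uniformly in `u`, `Im t → 0` and `Re t → -1`. -/
theorem t_limit_as_v_to_infty
    (a b c Cf : ℝ) (ha : 0 < a) (hab : a ≤ b) (hc0 : 0 ≤ c) (hc1 : c < 1)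
    (f : ℝ → ℝ) (hf_meas : Measurable f) (hf_nonneg : ∀ x, 0 ≤ f x)
    (hf_bdd : ∀ x, f x ≤ Cf) (hf_supp : ∀ x, x ∉ Set.Icc a b → f x = 0)
    (F : Measure ℝ)
    (hF : F = (ENNReal.ofReal c) • Measure.dirac (0 : ℝ) +
        (ENNReal.ofReal (1 - c)) • (volume.withDensity fun x => ENNReal.ofReal (f x)))
    (hprob : IsProbabilityMeasure F)
    (y σ : ℝ) (hy : 0 < y) (hσ : 0 < σ)
    (m : ℂ → ℂ) (hm : ∀ w : ℂ, m w = ∫ x, ((x : ℂ) - w)⁻¹ ∂F) :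
    ∀ ε > (0 : ℝ), ∃ V : ℝ, ∀ z t : ℂ, V ≤ z.im →
      0 < t.im → 0 < (z - t * (σ : ℂ) ^ 2).im →
      t = (y : ℂ) - 1 + (y : ℂ) * (z - t * (σ : ℂ) ^ 2) * m (z - t * (σ : ℂ) ^ 2) →
      |t.im| < ε ∧ |t.re + 1| < ε :=
  t_limit_as_v_to_infty_general a b c Cf ha hab hc0 hc1 f hf_meas hf_nonneg hf_bdd hf_supp F hF
    hprob y σ hy m hm
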